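/- arXiv:1101.5426 — 2 statements merged into one kernel-verified Lean document; each statement's English description precedes it below -/
import Mathlib

section
/- Let f ∈ L²((0,1)×(0,1)) be real-valued with f(x,t) = f(t,x) for a.e. (x,t), and let ε > 0 be such that for every u ∈ L²(0,1) one has ‖u‖² + ∫₀¹∫₀¹ f(x,t) u(t) conj(u(x)) dt dx ≥ ε‖u‖². Then for every k ∈ L²((0,1)×(0,1)) with k(x,t) = 0 for a.e. (x,t) with t > x, one has ‖k‖²_{L²((0,1)²)} + Re ∫₀¹∫₀¹∫₀¹ k(x,ξ) f(ξ,t) conj(k(x,t)) dξ dt dx ≥ ε ‖k‖²_{L²((0,1)²)}. -/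
open MeasureTheory Filter Topology Set Function
open scoped ENNReal

private lemma aux_integrable {μ : Measure ℝ} [SigmaFinite μ]
    (f : ℝ → ℝ → ℝ) (k : ℝ → ℝ → ℂ)
    (hfmeas : Measurable fun p : ℝ × ℝ => f p.1 p.2)
    (hfL2 : MemLp (fun p : ℝ × ℝ => f p.1 p.2) 2 (μ.prod μ))
    (hkmeas : Measurable fun p : ℝ × ℝ => k p.1 p.2)
    (hkL2 : MemLp (fun p : ℝ × ℝ => k p.1 p.2) 2 (μ.prod μ)) :
    Integrable
      (fun p : ℝ × ℝ × ℝ =>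
        k p.1 p.2.2 * (f p.2.2 p.2.1 : ℂ) * (starRingEnd ℂ) (k p.1 p.2.1))
      (μ.prod (μ.prod μ)) := by
  have hconj : Real.HolderConjugate 2 2 := Real.HolderConjugate.two_two
  set K : ℝ → ℝ → ℝ≥0∞ := fun x t => (‖k x t‖₊ : ℝ≥0∞) with hK
  set F : ℝ → ℝ → ℝ≥0∞ := fun s t => (‖f s t‖₊ : ℝ≥0∞) with hF
  have hKmeas : Measurable fun p : ℝ × ℝ => K p.1 p.2 :=
    hkmeas.nnnorm.coe_nnreal_ennreal
  have hFmeas : Measurable fun p : ℝ × ℝ => F p.1 p.2 :=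
    hfmeas.nnnorm.coe_nnreal_ennreal
  -- finiteness of the squares
  have hA : (∫⁻ p : ℝ × ℝ, K p.1 p.2 ^ (2:ℝ) ∂(μ.prod μ)) ≠ ⊤ := by
    have := (eLpNorm_lt_top_iff_lintegral_rpow_enorm_lt_top
      (f := fun p : ℝ × ℝ => k p.1 p.2) (μ := μ.prod μ) two_ne_zero ENNReal.ofNat_ne_top).mp hkL2.2
    simpa [ENNReal.toReal_ofNat, hK, enorm_eq_nnnorm] using this.ne
  have hB : (∫⁻ p : ℝ × ℝ, F p.1 p.2 ^ (2:ℝ) ∂(μ.prod μ)) ≠ ⊤ := by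
    have := (eLpNorm_lt_top_iff_lintegral_rpow_enorm_lt_top
      (f := fun p : ℝ × ℝ => f p.1 p.2) (μ := μ.prod μ) two_ne_zero ENNReal.ofNat_ne_top).mp hfL2.2
    simpa [ENNReal.toReal_ofNat, hF, enorm_eq_nnnorm] using this.ne
  have hconj : Real.HolderConjugate 2 2 := Real.HolderConjugate.two_two
  set g : ℝ → ℝ≥0∞ := fun ξ => (∫⁻ x, K x ξ ^ (2:ℝ) ∂μ) ^ (1/2 : ℝ) with hg
  have hKm2 : Measurable fun p : ℝ × ℝ => K p.1 p.2 ^ (2:ℝ) := hKmeas.pow_const _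
  have hgmeas : Measurable g := by
    exact (Measurable.lintegral_prod_left (f := fun x ξ => K x ξ ^ (2:ℝ)) hKm2).pow_const _
  -- ∫⁻ g^2 = A
  have hg2 : (∫⁻ ξ, g ξ ^ (2:ℝ) ∂μ) = ∫⁻ p : ℝ × ℝ, K p.1 p.2 ^ (2:ℝ) ∂(μ.prod μ) := by
    have h1 : ∀ ξ, g ξ ^ (2:ℝ) = ∫⁻ x, K x ξ ^ (2:ℝ) ∂μ := by
      intro ξ
      rw [hg]
      rw [← ENNReal.rpow_mul]
      norm_num
    simp_rw [h1]
    rw [lintegral_prod _ hKm2.aemeasurable]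
    exact (lintegral_lintegral_swap hKm2.aemeasurable).symm
  -- measurability of the big integrand
  have hTmeas : Measurable
      (fun p : ℝ × ℝ × ℝ =>
        k p.1 p.2.2 * (f p.2.2 p.2.1 : ℂ) * (starRingEnd ℂ) (k p.1 p.2.1)) := by
    have h1 : Measurable fun p : ℝ × ℝ × ℝ => k p.1 p.2.2 :=
      hkmeas.comp (measurable_fst.prodMk (measurable_snd.snd))
    have h2 : Measurable fun p : ℝ × ℝ × ℝ => (f p.2.2 p.2.1 : ℂ) :=
      Complex.measurable_ofReal.comp
        (hfmeas.comp ((measurable_snd.snd).prodMk (measurable_snd.fst)))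
    have h3 : Measurable fun p : ℝ × ℝ × ℝ => (starRingEnd ℂ) (k p.1 p.2.1) :=
      (Complex.continuous_conj.measurable).comp
        (hkmeas.comp (measurable_fst.prodMk (measurable_snd.fst)))
    exact (h1.mul h2).mul h3
  refine ⟨hTmeas.aestronglyMeasurable, ?_⟩
  rw [hasFiniteIntegral_def]
  have hnorm : ∀ p : ℝ × ℝ × ℝ,
      (‖k p.1 p.2.2 * (f p.2.2 p.2.1 : ℂ) * (starRingEnd ℂ) (k p.1 p.2.1)‖₊ : ℝ≥0∞)
        = K p.1 p.2.2 * F p.2.2 p.2.1 * K p.1 p.2.1 := by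
    intro p
    simp [hK, hF, nnnorm_mul, ENNReal.coe_mul, Complex.nnnorm_real]
  calc
    (∫⁻ p : ℝ × ℝ × ℝ,
        (‖k p.1 p.2.2 * (f p.2.2 p.2.1 : ℂ) * (starRingEnd ℂ) (k p.1 p.2.1)‖₊ : ℝ≥0∞)
        ∂(μ.prod (μ.prod μ)))
      = ∫⁻ q : ℝ × ℝ, ∫⁻ x, K x q.2 * F q.2 q.1 * K x q.1 ∂μ ∂(μ.prod μ) := by
        have hM : Measurable fun p : ℝ × ℝ × ℝ =>
            K p.1 p.2.2 * F p.2.2 p.2.1 * K p.1 p.2.1 := by fun_prop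
        simp_rw [hnorm]
        rw [lintegral_prod _ hM.aemeasurable]
        exact lintegral_lintegral_swap hM.aemeasurable
    _ = ∫⁻ q : ℝ × ℝ, F q.2 q.1 * ∫⁻ x, K x q.2 * K x q.1 ∂μ ∂(μ.prod μ) := by
        refine lintegral_congr fun q => ?_
        rw [← lintegral_const_mul' _ _ (by simp [hF])]
        congr 1; ext x; ring
    _ ≤ ∫⁻ q : ℝ × ℝ, F q.2 q.1 * (g q.2 * g q.1) ∂(μ.prod μ) := by
        refine lintegral_mono fun q => ?_
        gcongr
        have := ENNReal.lintegral_mul_le_Lp_mul_Lq μ hconj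
          (f := fun x => K x q.2) (g := fun x => K x q.1) (by fun_prop) (by fun_prop)
        simpa [hg, one_div] using this
    _ ≤ (∫⁻ q : ℝ × ℝ, F q.2 q.1 ^ (2:ℝ) ∂(μ.prod μ)) ^ (1/2:ℝ) *
        (∫⁻ q : ℝ × ℝ, (g q.2 * g q.1) ^ (2:ℝ) ∂(μ.prod μ)) ^ (1/2:ℝ) := by
        exact ENNReal.lintegral_mul_le_Lp_mul_Lq (μ.prod μ) hconj
          (f := fun q => F q.2 q.1) (g := fun q => g q.2 * g q.1)
          (by fun_prop) (by fun_prop)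
    _ < ⊤ := by
        have hBswap : (∫⁻ q : ℝ × ℝ, F q.2 q.1 ^ (2:ℝ) ∂(μ.prod μ))
            = ∫⁻ p : ℝ × ℝ, F p.1 p.2 ^ (2:ℝ) ∂(μ.prod μ) := by
          rw [← lintegral_prod_swap (f := fun p : ℝ × ℝ => F p.1 p.2 ^ (2:ℝ))]
          rfl
        have hgg : (∫⁻ q : ℝ × ℝ, (g q.2 * g q.1) ^ (2:ℝ) ∂(μ.prod μ))
            = (∫⁻ ξ, g ξ ^ (2:ℝ) ∂μ) * ∫⁻ ξ, g ξ ^ (2:ℝ) ∂μ := by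
          have : ∀ q : ℝ × ℝ, (g q.2 * g q.1) ^ (2:ℝ) = g q.1 ^ (2:ℝ) * g q.2 ^ (2:ℝ) := by
            intro q
            rw [ENNReal.mul_rpow_of_nonneg _ _ (by norm_num), mul_comm]
          simp_rw [this]
          exact lintegral_prod_mul (hgmeas.pow_const _).aemeasurable (hgmeas.pow_const _).aemeasurable
        rw [hBswap, hgg, hg2]
        exact ENNReal.mul_lt_top
          (ENNReal.rpow_lt_top_of_nonneg (by norm_num) hB)
          (ENNReal.rpow_lt_top_of_nonneg (by norm_num) (ENNReal.mul_ne_top hA hA))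

theorem stmt_3 (f : ℝ → ℝ → ℝ) (k : ℝ → ℝ → ℂ) (ε : ℝ) (hε : 0 < ε)
    (hfmeas : Measurable fun p : ℝ × ℝ => f p.1 p.2)
    (hfL2 : MemLp (fun p : ℝ × ℝ => f p.1 p.2) 2
      ((volume.restrict (Set.Ioo (0 : ℝ) 1)).prod (volume.restrict (Set.Ioo (0 : ℝ) 1))))
    (hsym : ∀ᵐ p : ℝ × ℝ
        ∂((volume.restrict (Set.Ioo (0 : ℝ) 1)).prod (volume.restrict (Set.Ioo (0 : ℝ) 1))),
      f p.1 p.2 = f p.2 p.1)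
    (hpos : ∀ u : ℝ → ℂ, MemLp u 2 (volume.restrict (Set.Ioo (0 : ℝ) 1)) →
      ε * ∫ x in Set.Ioo (0 : ℝ) 1, ‖u x‖ ^ 2 ≤
        (∫ x in Set.Ioo (0 : ℝ) 1, ‖u x‖ ^ 2) +
          (∫ x in Set.Ioo (0 : ℝ) 1, ∫ t in Set.Ioo (0 : ℝ) 1,
            ((f x t : ℂ) * u t * (starRingEnd ℂ) (u x))).re)
    (hkmeas : Measurable fun p : ℝ × ℝ => k p.1 p.2)
    (hkL2 : MemLp (fun p : ℝ × ℝ => k p.1 p.2) 2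
      ((volume.restrict (Set.Ioo (0 : ℝ) 1)).prod (volume.restrict (Set.Ioo (0 : ℝ) 1))))
    (htri : ∀ᵐ p : ℝ × ℝ
        ∂((volume.restrict (Set.Ioo (0 : ℝ) 1)).prod (volume.restrict (Set.Ioo (0 : ℝ) 1))),
      p.1 < p.2 → k p.1 p.2 = 0) :
    ε * (∫ x in Set.Ioo (0 : ℝ) 1, ∫ t in Set.Ioo (0 : ℝ) 1, ‖k x t‖ ^ 2) ≤
      (∫ x in Set.Ioo (0 : ℝ) 1, ∫ t in Set.Ioo (0 : ℝ) 1, ‖k x t‖ ^ 2) +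
        (∫ x in Set.Ioo (0 : ℝ) 1, ∫ t in Set.Ioo (0 : ℝ) 1, ∫ ξ in Set.Ioo (0 : ℝ) 1,
          k x ξ * (f ξ t : ℂ) * (starRingEnd ℂ) (k x t)).re := by
  set μ : Measure ℝ := volume.restrict (Set.Ioo (0 : ℝ) 1) with hμdef
  -- the three-variable integrand
  set T : ℝ × ℝ × ℝ → ℂ := fun p =>
    k p.1 p.2.2 * (f p.2.2 p.2.1 : ℂ) * (starRingEnd ℂ) (k p.1 p.2.1) with hTdef
  have hT : Integrable T (μ.prod (μ.prod μ)) :=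
    aux_integrable f k hfmeas hfL2 hkmeas hkL2
  have hTslice : ∀ᵐ x ∂μ, Integrable (fun q : ℝ × ℝ => T (x, q)) (μ.prod μ) :=
    hT.prod_right_ae
  have h1 : Integrable (fun p : ℝ × ℝ => ‖k p.1 p.2‖ ^ 2) (μ.prod μ) :=
    (memLp_two_iff_integrable_sq_norm hkL2.aestronglyMeasurable).mp hkL2
  have hNslice : ∀ᵐ x ∂μ, Integrable (fun t => ‖k x t‖ ^ 2) μ := h1.prod_right_ae
  have hkslice : ∀ᵐ x ∂μ, MemLp (fun t => k x t) 2 μ := by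
    filter_upwards [hNslice] with x hx
    exact (memLp_two_iff_integrable_sq_norm
      ((hkmeas.comp measurable_prodMk_left).aestronglyMeasurable)).mpr hx
  -- notation
  set N : ℝ → ℝ := fun x => ∫ t, ‖k x t‖ ^ 2 ∂μ with hNdef
  set G : ℝ → ℂ := fun x => ∫ t, ∫ ξ, k x ξ * (f ξ t : ℂ) * (starRingEnd ℂ) (k x t) ∂μ ∂μ
    with hGdef
  -- pointwise inequality a.e.
  have hptwise : ∀ᵐ x ∂μ, ε * N x ≤ N x + (∫ q, T (x, q) ∂(μ.prod μ)).re := by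
    filter_upwards [hTslice, hkslice] with x hTx hkx
    have hp := hpos (fun t => k x t) hkx
    -- identify the double integral in hpos with the ∫ over the product, after conj/swap
    have hswap : (∫ s, ∫ t, ((f s t : ℂ) * k x t * (starRingEnd ℂ) (k x s)) ∂μ ∂μ)
        = (starRingEnd ℂ) (∫ q, T (x, q) ∂(μ.prod μ)) := by
      have hTx' : Integrable ((fun q : ℝ × ℝ => T (x, q)) ∘ Prod.swap) (μ.prod μ) := hTx.swap
      have e1 : (∫ q : ℝ × ℝ, T (x, q) ∂(μ.prod μ))
          = ∫ t, ∫ ξ, k x ξ * (f ξ t : ℂ) * (starRingEnd ℂ) (k x t) ∂μ ∂μ :=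
        (integral_integral (f := fun t ξ => k x ξ * (f ξ t : ℂ) * (starRingEnd ℂ) (k x t))
          hTx).symm
      have e2 : (∫ t, ∫ ξ, k x ξ * (f ξ t : ℂ) * (starRingEnd ℂ) (k x t) ∂μ ∂μ)
          = ∫ ξ, ∫ t, k x ξ * (f ξ t : ℂ) * (starRingEnd ℂ) (k x t) ∂μ ∂μ := by
        exact integral_integral_swap
          (f := fun t ξ => k x ξ * (f ξ t : ℂ) * (starRingEnd ℂ) (k x t)) hTx
      rw [e1, e2]
      rw [← integral_conj]
      refine integral_congr_ae (Eventually.of_forall fun s => ?_)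
      beta_reduce
      rw [← integral_conj]
      refine integral_congr_ae (Eventually.of_forall fun t => ?_)
      simp only [map_mul, Complex.conj_ofReal, Complex.conj_conj]
      ring
    rw [hswap] at hp
    simpa [Complex.conj_re] using hp
  -- integrability of the pieces
  have hNint : Integrable N μ := h1.integral_prod_left
  have hGint : Integrable (fun x => ∫ q, T (x, q) ∂(μ.prod μ)) μ := hT.integral_prod_left
  have hGeq : ∀ᵐ x ∂μ, G x = ∫ q, T (x, q) ∂(μ.prod μ) := by
    filter_upwards [hTslice] with x hTx
    exact integral_integral (f := fun t ξ => k x ξ * (f ξ t : ℂ) * (starRingEnd ℂ) (k x t))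
      hTx
  -- final assembly
  have key : ε * ∫ x, N x ∂μ ≤ ∫ x, (N x + (∫ q, T (x, q) ∂(μ.prod μ)).re) ∂μ := by
    rw [← integral_const_mul]
    refine integral_mono_ae (hNint.const_mul ε) (hNint.add hGint.re) ?_
    exact hptwise
  have hsplit : (∫ x, (N x + (∫ q, T (x, q) ∂(μ.prod μ)).re) ∂μ)
      = (∫ x, N x ∂μ) + ∫ x, (∫ q, T (x, q) ∂(μ.prod μ)).re ∂μ :=
    integral_add hNint hGint.re
  have hre : (∫ x, (∫ q, T (x, q) ∂(μ.prod μ)).re ∂μ) = (∫ x, G x ∂μ).re := by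
    rw [integral_congr_ae (g := fun x => ∫ q, T (x, q) ∂(μ.prod μ)) hGeq]
    exact integral_re hGint
  calc ε * ∫ x, N x ∂μ ≤ (∫ x, N x ∂μ) + ∫ x, (∫ q, T (x, q) ∂(μ.prod μ)).re ∂μ := by
        rw [← hsplit]; exact key
    _ = (∫ x, N x ∂μ) + (∫ x, G x ∂μ).re := by rw [hre]
end

section
/- Let f ∈ L²(0,1) be real-valued with f(1−x) = −f(x) a.e., and put s_{2n}(f) := ∫₀¹ f(x) sin(2πn x) dx. Then the series T(f)(x) := Σ_{n=1}^∞ [cos(2πn x + 2 s_{2n}(f) x) − cos(2πn x)] converges in L²(0,1), and the map f ↦ T(f) is Lipschitz continuous on bounded subsets of L²(0,1): for every K > 0 there exists C = C(K) > 0 such that ‖T(f₁) − T(f₂)‖_{L²(0,1)} ≤ C ‖f₁ − f₂‖_{L²(0,1)} whenever ‖f₁‖_{L²(0,1)} ≤ K and ‖f₂‖_{L²(0,1)} ≤ K. -/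
open MeasureTheory Filter Topology Set

/-- The sine Fourier coefficient `s_{2m}(f) = ∫₀¹ f(x) sin(2πmx) dx`. -/
noncomputable def s2 (f : ℝ → ℝ) (m : ℕ) : ℝ :=
  ∫ x in Set.Ioo (0 : ℝ) 1, f x * Real.sin (2 * Real.pi * (m : ℝ) * x)

/-- The `n`-th term (`n ≥ 1`, here indexed by `n+1`) of the series
`T(f)(x) = ∑_{n≥1} [cos(2πnx + 2 s_{2n}(f) x) - cos(2πnx)]`. -/
noncomputable def tTerm (f : ℝ → ℝ) (n : ℕ) (x : ℝ) : ℝ :=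
  Real.cos (2 * Real.pi * ((n : ℝ) + 1) * x + 2 * s2 f (n + 1) * x) -
    Real.cos (2 * Real.pi * ((n : ℝ) + 1) * x)

/-- `T` is the sum of the series in `L²(0,1)`. -/
def IsTSum (f T : ℝ → ℝ) : Prop :=
  MemLp T 2 (volume.restrict (Set.Ioo (0 : ℝ) 1)) ∧
  Filter.Tendsto
    (fun N : ℕ => ∫ x in Set.Ioo (0 : ℝ) 1,
      (T x - ∑ n ∈ Finset.range N, tTerm f n x) ^ 2)
    Filter.atTop (nhds 0)

/-- A real-valued `f ∈ L²(0,1)` which is odd with respect to `x = 1/2`. -/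
def GoodOdd (f : ℝ → ℝ) : Prop :=
  MemLp f 2 (volume.restrict (Set.Ioo (0 : ℝ) 1)) ∧
  (∀ᵐ x ∂(volume.restrict (Set.Ioo (0 : ℝ) 1)), f (1 - x) = -f x)

namespace Stmt12
open Real intervalIntegral
noncomputable section

open Real

lemma abs_between {u v M x : ℝ} (hu : |u| ≤ M) (hv : |v| ≤ M) (hx : x ∈ Set.uIoc v u) :
    |x| ≤ M := by
  rcases abs_le.1 hu with ⟨hu1, hu2⟩
  rcases abs_le.1 hv with ⟨hv1, hv2⟩
  rw [Set.uIoc] at hx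
  rcases hx with ⟨h1, h2⟩
  rw [abs_le]
  exact ⟨le_trans (le_min hv1 hu1) h1.le, le_trans h2 (max_le hv2 hu2)⟩

lemma key_cos_sub_cos {u v M : ℝ} (hu : |u| ≤ M) (hv : |v| ≤ M) :
    |Real.cos u - Real.cos v| ≤ M * |u - v| := by
  have h : (∫ x in v..u, Real.sin x) = Real.cos v - Real.cos u := integral_sin
  have h2 : Real.cos u - Real.cos v = -(∫ x in v..u, Real.sin x) := by rw [h]; ring
  rw [h2, abs_neg]
  have h3 := intervalIntegral.norm_integral_le_of_norm_le_const (C := M)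
    (f := Real.sin) (a := v) (b := u) ?_
  · simpa [Real.norm_eq_abs, abs_sub_comm] using h3
  · intro x hx
    rw [Real.norm_eq_abs]
    exact (Real.abs_sin_le_abs).trans (abs_between hu hv hx)

lemma key_cos_sub_one (t : ℝ) : |Real.cos t - 1| ≤ t ^ 2 := by
  have h := key_cos_sub_cos (u := t) (v := 0) (M := |t|) le_rfl (by simp)
  rw [Real.cos_zero, sub_zero] at h
  calc |Real.cos t - 1| ≤ |t| * |t| := h
    _ = t ^ 2 := by rw [← abs_mul, abs_of_nonneg (mul_self_nonneg t), sq]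

lemma key_sin_sub {u v M : ℝ} (hu : |u| ≤ M) (hv : |v| ≤ M) :
    |(Real.sin u - u) - (Real.sin v - v)| ≤ M ^ 2 * |u - v| := by
  have h1 : (∫ x in v..u, (Real.cos x - 1)) = (Real.sin u - u) - (Real.sin v - v) := by
    rw [intervalIntegral.integral_sub (Real.continuous_cos.intervalIntegrable _ _)
      intervalIntegrable_const, integral_cos, intervalIntegral.integral_const]
    simp; ring
  rw [← h1]
  have h3 := intervalIntegral.norm_integral_le_of_norm_le_const (C := M ^ 2)
    (f := fun x => Real.cos x - 1) (a := v) (b := u) ?_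
  · simpa [Real.norm_eq_abs, abs_sub_comm] using h3
  · intro x hx
    rw [Real.norm_eq_abs]
    calc |Real.cos x - 1| ≤ x ^ 2 := key_cos_sub_one x
      _ = |x| ^ 2 := (sq_abs x).symm
      _ ≤ M ^ 2 := by
          have := abs_between hu hv hx
          exact pow_le_pow_left₀ (abs_nonneg x) this 2

lemma key_sin_sub_self {t : ℝ} : |Real.sin t - t| ≤ t ^ 2 * |t| := by
  have h := key_sin_sub (u := t) (v := 0) (M := |t|) le_rfl (by simp)
  simpa [sq_abs] using h



noncomputable def eG (s P x : ℝ) : ℝ :=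
  Real.cos (P + 2 * s * x) - Real.cos P + 2 * s * x * Real.sin P

lemma eG_eq (s P x : ℝ) :
    eG s P x = Real.cos P * (Real.cos (2 * s * x) - 1)
      - Real.sin P * (Real.sin (2 * s * x) - 2 * s * x) := by
  unfold eG; rw [Real.cos_add]; ring


lemma eG_bound {s P x B : ℝ} (hx0 : 0 ≤ x) (hx1 : x ≤ 1) (hs : |s| ≤ B) :
    |eG s P x| ≤ (4 + 8 * B) * s ^ 2 := by
  rw [eG_eq]
  have hB : 0 ≤ B := le_trans (abs_nonneg s) hs
  have hu : |2 * s * x| ≤ 2 * |s| := by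
    rw [abs_mul, abs_mul, abs_two, abs_of_nonneg hx0]
    nlinarith [abs_nonneg s]
  have h1 : |Real.cos (2 * s * x) - 1| ≤ 4 * s ^ 2 := by
    calc |Real.cos (2 * s * x) - 1| ≤ (2 * s * x) ^ 2 := key_cos_sub_one _
      _ = |2 * s * x| ^ 2 := (sq_abs _).symm
      _ ≤ (2 * |s|) ^ 2 := pow_le_pow_left₀ (abs_nonneg _) hu 2
      _ = 4 * s ^ 2 := by rw [mul_pow, sq_abs]; ring
  have h2 : |Real.sin (2 * s * x) - 2 * s * x| ≤ 4 * s ^ 2 * (2 * |s|) := by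
    calc |Real.sin (2 * s * x) - 2 * s * x| ≤ (2 * s * x) ^ 2 * |2 * s * x| :=
        key_sin_sub_self
      _ = |2 * s * x| ^ 2 * |2 * s * x| := by rw [sq_abs]
      _ ≤ (2 * |s|) ^ 2 * (2 * |s|) := by
          exact mul_le_mul (pow_le_pow_left₀ (abs_nonneg _) hu 2) hu (abs_nonneg _)
            (by positivity)
      _ = 4 * s ^ 2 * (2 * |s|) := by rw [mul_pow, sq_abs]; ring
  calc |Real.cos P * (Real.cos (2 * s * x) - 1)
        - Real.sin P * (Real.sin (2 * s * x) - 2 * s * x)|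
      ≤ |Real.cos P * (Real.cos (2 * s * x) - 1)|
        + |Real.sin P * (Real.sin (2 * s * x) - 2 * s * x)| := abs_sub _ _
    _ ≤ |Real.cos (2 * s * x) - 1| + |Real.sin (2 * s * x) - 2 * s * x| := by
        rw [abs_mul, abs_mul]
        gcongr
        · exact mul_le_of_le_one_left (abs_nonneg _) (Real.abs_cos_le_one P)
        · exact mul_le_of_le_one_left (abs_nonneg _) (Real.abs_sin_le_one P)
    _ ≤ 4 * s ^ 2 + 4 * s ^ 2 * (2 * |s|) := add_le_add h1 h2
    _ ≤ (4 + 8 * B) * s ^ 2 := by nlinarith [sq_nonneg s, abs_nonneg s]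

lemma eG_diff_bound {s t P x B : ℝ} (hx0 : 0 ≤ x) (hx1 : x ≤ 1)
    (hs : |s| ≤ B) (ht : |t| ≤ B) :
    |eG s P x - eG t P x| ≤ (4 + 16 * B) * ((|s| + |t|) * |s - t|) := by
  have hB : 0 ≤ B := le_trans (abs_nonneg s) hs
  set M : ℝ := 2 * (|s| + |t|) with hM
  have hMB : M ≤ 2 * (2 * B) := by rw [hM]; gcongr; linarith
  have hMnn : 0 ≤ M := by positivity
  have hu : |2 * s * x| ≤ M := by
    rw [abs_mul, abs_mul, abs_two, abs_of_nonneg hx0]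
    nlinarith [abs_nonneg s, abs_nonneg t]
  have hv : |2 * t * x| ≤ M := by
    rw [abs_mul, abs_mul, abs_two, abs_of_nonneg hx0]
    nlinarith [abs_nonneg s, abs_nonneg t]
  have huv : |2 * s * x - 2 * t * x| ≤ 2 * |s - t| := by
    have : 2 * s * x - 2 * t * x = 2 * (s - t) * x := by ring
    rw [this, abs_mul, abs_mul, abs_two, abs_of_nonneg hx0]
    nlinarith [abs_nonneg (s - t)]
  have h1 : |Real.cos (2 * s * x) - Real.cos (2 * t * x)| ≤ M * (2 * |s - t|) := by
    calc |Real.cos (2 * s * x) - Real.cos (2 * t * x)| ≤ M * |2 * s * x - 2 * t * x| :=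
        key_cos_sub_cos hu hv
      _ ≤ M * (2 * |s - t|) := by gcongr
  have h2 : |(Real.sin (2 * s * x) - 2 * s * x) - (Real.sin (2 * t * x) - 2 * t * x)|
      ≤ M ^ 2 * (2 * |s - t|) := by
    calc _ ≤ M ^ 2 * |2 * s * x - 2 * t * x| := key_sin_sub hu hv
      _ ≤ M ^ 2 * (2 * |s - t|) := by gcongr
  have hde : eG s P x - eG t P x
      = Real.cos P * (Real.cos (2 * s * x) - Real.cos (2 * t * x))
        - Real.sin P * ((Real.sin (2 * s * x) - 2 * s * x)
          - (Real.sin (2 * t * x) - 2 * t * x)) := by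
    rw [eG_eq, eG_eq]; ring
  rw [hde]
  calc |Real.cos P * (Real.cos (2 * s * x) - Real.cos (2 * t * x))
        - Real.sin P * ((Real.sin (2 * s * x) - 2 * s * x)
          - (Real.sin (2 * t * x) - 2 * t * x))|
      ≤ |Real.cos P * (Real.cos (2 * s * x) - Real.cos (2 * t * x))|
        + |Real.sin P * ((Real.sin (2 * s * x) - 2 * s * x)
          - (Real.sin (2 * t * x) - 2 * t * x))| := abs_sub _ _
    _ ≤ |Real.cos (2 * s * x) - Real.cos (2 * t * x)|
        + |(Real.sin (2 * s * x) - 2 * s * x) - (Real.sin (2 * t * x) - 2 * t * x)| := by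
        rw [abs_mul, abs_mul]
        gcongr
        · exact mul_le_of_le_one_left (abs_nonneg _) (Real.abs_cos_le_one P)
        · exact mul_le_of_le_one_left (abs_nonneg _) (Real.abs_sin_le_one P)
    _ ≤ M * (2 * |s - t|) + M ^ 2 * (2 * |s - t|) := add_le_add h1 h2
    _ ≤ (4 + 16 * B) * ((|s| + |t|) * |s - t|) := by
        have hM2 : M ^ 2 ≤ (2 * (2 * B)) * M := by
          rw [sq]; exact mul_le_mul_of_nonneg_right hMB hMnn
        have h3 : M ^ 2 * (2 * |s - t|) ≤ ((2 * (2 * B)) * M) * (2 * |s - t|) :=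
          mul_le_mul_of_nonneg_right hM2 (by positivity)
        have h4 : ((2 * (2 * B)) * M) * (2 * |s - t|)
            = 16 * B * ((|s| + |t|) * |s - t|) := by rw [hM]; ring
        have h5 : M * (2 * |s - t|) = 4 * ((|s| + |t|) * |s - t|) := by rw [hM]; ring
        nlinarith [abs_nonneg (s - t), abs_nonneg s, abs_nonneg t,
          mul_nonneg (mul_nonneg (by positivity : (0:ℝ) ≤ |s| + |t|) (abs_nonneg (s - t))) hB]

lemma integral_cos_mul {c : ℝ} (hc : c ≠ 0) :
    (∫ x in (0:ℝ)..1, Real.cos (c * x)) = Real.sin c / c := by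
  rw [intervalIntegral.integral_comp_mul_left Real.cos hc]
  simp [integral_cos, smul_eq_mul]
  ring

lemma integral_cos_int {k : ℤ} (hk : k ≠ 0) :
    (∫ x in (0:ℝ)..1, Real.cos (2 * π * (k : ℝ) * x)) = 0 := by
  have hc : 2 * π * (k : ℝ) ≠ 0 := by
    have := Real.pi_ne_zero
    have : (k : ℝ) ≠ 0 := Int.cast_ne_zero.2 hk
    positivity
  rw [integral_cos_mul hc]
  have : Real.sin (2 * π * (k : ℝ)) = 0 := by
    have : 2 * π * (k : ℝ) = ((2 * k : ℤ) : ℝ) * π := by push_cast; ring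
    rw [this, Real.sin_int_mul_pi]
  rw [this, zero_div]

lemma sf_orth_interval (n m : ℕ) :
    (∫ x in (0:ℝ)..1, Real.sin (2 * π * ((n:ℝ) + 1) * x) * Real.sin (2 * π * ((m:ℝ) + 1) * x))
      = if n = m then 1 / 2 else 0 := by
  have hpt : ∀ x : ℝ, Real.sin (2 * π * ((n:ℝ) + 1) * x) * Real.sin (2 * π * ((m:ℝ) + 1) * x)
      = 1 / 2 * (Real.cos (2 * π * ((n:ℝ) - (m:ℝ)) * x)
        - Real.cos (2 * π * ((n:ℝ) + (m:ℝ) + 2) * x)) := by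
    intro x
    have h1 : 2 * π * ((n:ℝ) - (m:ℝ)) * x
        = 2 * π * ((n:ℝ) + 1) * x - 2 * π * ((m:ℝ) + 1) * x := by ring
    have h2 : 2 * π * ((n:ℝ) + (m:ℝ) + 2) * x
        = 2 * π * ((n:ℝ) + 1) * x + 2 * π * ((m:ℝ) + 1) * x := by ring
    rw [h1, h2, Real.cos_sub, Real.cos_add]; ring
  rw [intervalIntegral.integral_congr (g := fun x => 1 / 2 *
    (Real.cos (2 * π * ((n:ℝ) - (m:ℝ)) * x) - Real.cos (2 * π * ((n:ℝ) + (m:ℝ) + 2) * x)))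
    (fun x _ => hpt x)]
  have hint1 : IntervalIntegrable (fun x => Real.cos (2 * π * ((n:ℝ) - (m:ℝ)) * x))
      MeasureTheory.volume 0 1 := (Real.continuous_cos.comp (by continuity)).intervalIntegrable _ _
  have hint2 : IntervalIntegrable (fun x => Real.cos (2 * π * ((n:ℝ) + (m:ℝ) + 2) * x))
      MeasureTheory.volume 0 1 := (Real.continuous_cos.comp (by continuity)).intervalIntegrable _ _
  rw [intervalIntegral.integral_const_mul, intervalIntegral.integral_sub hint1 hint2]
  have h2 : (∫ x in (0:ℝ)..1, Real.cos (2 * π * ((n:ℝ) + (m:ℝ) + 2) * x)) = 0 := by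
    have : ((n:ℝ) + (m:ℝ) + 2) = (((n : ℤ) + m + 2 : ℤ) : ℝ) := by push_cast; ring
    rw [this]
    exact integral_cos_int (by omega)
  rw [h2, sub_zero]
  by_cases hnm : n = m
  · subst hnm
    simp only [sub_self, mul_zero, zero_mul, Real.cos_zero, if_pos rfl]
    rw [intervalIntegral.integral_congr (g := fun _ => (1:ℝ)) (fun x _ => by norm_num)]
    simp
  · have : ((n:ℝ) - (m:ℝ)) = (((n : ℤ) - m : ℤ) : ℝ) := by push_cast; ring
    rw [this, integral_cos_int (by omega : ((n:ℤ) - m) ≠ 0), if_neg hnm]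
    ring

lemma sf_orth (n m : ℕ) :
    (∫ x in Set.Ioo (0:ℝ) 1,
        Real.sin (2 * π * ((n:ℝ) + 1) * x) * Real.sin (2 * π * ((m:ℝ) + 1) * x))
      = if n = m then 1 / 2 else 0 := by
  rw [← MeasureTheory.integral_Ioc_eq_integral_Ioo,
    ← intervalIntegral.integral_of_le (zero_le_one)]
  exact sf_orth_interval n m




abbrev μ01 : Measure ℝ := volume.restrict (Set.Ioo (0:ℝ) 1)

instance : IsFiniteMeasure μ01 :=
  ⟨by rw [Measure.restrict_apply_univ]; simp [Real.volume_Ioo]⟩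

lemma μ01_univ : μ01 Set.univ = 1 := by
  rw [Measure.restrict_apply_univ]; simp [Real.volume_Ioo]

def sf (n : ℕ) (x : ℝ) : ℝ := Real.sin (2 * π * ((n:ℝ) + 1) * x)

lemma sf_cont (n : ℕ) : Continuous (sf n) := by
  unfold sf; continuity

lemma memLp_sf (n : ℕ) : MemLp (sf n) 2 μ01 :=
  MemLp.of_bound (sf_cont n).aestronglyMeasurable 1
    (ae_of_all _ fun x => by
      simpa [Real.norm_eq_abs, sf] using Real.abs_sin_le_one _)

lemma inner_toLp {u v : ℝ → ℝ} (hu : MemLp u 2 μ01) (hv : MemLp v 2 μ01) :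
    (inner ℝ (hu.toLp u) (hv.toLp v) : ℝ) = ∫ x in Set.Ioo (0:ℝ) 1, u x * v x := by
  rw [MeasureTheory.L2.inner_def]
  apply MeasureTheory.integral_congr_ae
  filter_upwards [MemLp.coeFn_toLp hu, MemLp.coeFn_toLp hv] with x h1 h2
  simp [h1, h2, RCLike.inner_apply, mul_comm]

lemma norm_toLp_sq {u : ℝ → ℝ} (hu : MemLp u 2 μ01) :
    ‖hu.toLp u‖ ^ 2 = ∫ x in Set.Ioo (0:ℝ) 1, (u x) ^ 2 := by
  rw [← real_inner_self_eq_norm_sq, inner_toLp hu hu]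
  apply MeasureTheory.integral_congr_ae
  exact ae_of_all _ fun x => (sq (u x)).symm

lemma norm_toLp_eq {u : ℝ → ℝ} (hu : MemLp u 2 μ01) :
    ‖hu.toLp u‖ = Real.sqrt (∫ x in Set.Ioo (0:ℝ) 1, (u x) ^ 2) := by
  rw [← norm_toLp_sq hu, Real.sqrt_sq (norm_nonneg _)]

lemma norm_toLp_le_of_bound {u : ℝ → ℝ} (hu : MemLp u 2 μ01) {C : ℝ} (hC : 0 ≤ C)
    (h : ∀ᵐ x ∂μ01, |u x| ≤ C) : ‖hu.toLp u‖ ≤ C := by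
  rw [Lp.norm_toLp]
  have h' : ∀ᵐ x ∂μ01, ‖u x‖ ≤ C := by
    filter_upwards [h] with x hx; rwa [Real.norm_eq_abs]
  have := MeasureTheory.eLpNorm_le_of_ae_bound (p := 2) (μ := μ01) h'
  rw [μ01_univ, ENNReal.one_rpow, one_mul] at this
  calc (eLpNorm u 2 μ01).toReal ≤ (ENNReal.ofReal C).toReal :=
        ENNReal.toReal_mono ENNReal.ofReal_ne_top this
    _ = C := ENNReal.toReal_ofReal hC

lemma norm_toLp_mono {u v : ℝ → ℝ} (hu : MemLp u 2 μ01) (hv : MemLp v 2 μ01)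
    (h : ∀ᵐ x ∂μ01, |u x| ≤ |v x|) : ‖hu.toLp u‖ ≤ ‖hv.toLp v‖ := by
  rw [Lp.norm_toLp, Lp.norm_toLp]
  refine ENNReal.toReal_mono hv.2.ne (eLpNorm_mono_ae ?_)
  filter_upwards [h] with x hx
  rwa [Real.norm_eq_abs, Real.norm_eq_abs]

lemma toLp_sum {u : ℕ → ℝ → ℝ} (hu : ∀ n, MemLp (u n) 2 μ01) (F : Finset ℕ) :
    (memLp_finset_sum' F (fun n _ => hu n)).toLp (∑ n ∈ F, u n)
      = ∑ n ∈ F, (hu n).toLp (u n) := by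
  classical
  induction F using Finset.induction with
  | empty => simp
  | insert _ _ hnF ih =>
      rename_i a F'
      calc (memLp_finset_sum' (insert a F') (fun n _ => hu n)).toLp (∑ n ∈ insert a F', u n)
          = ((hu a).add (memLp_finset_sum' F' (fun n _ => hu n))).toLp
              (u a + ∑ n ∈ F', u n) :=
            MemLp.toLp_congr _ _ (by rw [Finset.sum_insert hnF])
        _ = (hu a).toLp (u a)
              + (memLp_finset_sum' F' (fun n _ => hu n)).toLp (∑ n ∈ F', u n) :=
            MemLp.toLp_add _ _
        _ = ∑ n ∈ insert a F', (hu n).toLp (u n) := by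
            rw [ih, Finset.sum_insert hnF]

-- ===== Block 5 : orthonormal family, Bessel =====

def W (n : ℕ) : Lp ℝ 2 μ01 := (memLp_sf n).toLp (sf n)

lemma inner_W_W (n m : ℕ) : (inner ℝ (W n) (W m) : ℝ) = if n = m then 1 / 2 else 0 := by
  rw [W, W, inner_toLp (memLp_sf n) (memLp_sf m)]
  exact sf_orth n m

def V (n : ℕ) : Lp ℝ 2 μ01 := (Real.sqrt 2) • W n

lemma orthonormal_V : Orthonormal ℝ V := by
  rw [orthonormal_iff_ite]
  intro i j
  show (inner ℝ (V i) (V j) : ℝ) = _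
  unfold V
  rw [real_inner_smul_left, real_inner_smul_right, inner_W_W]
  have h2 : Real.sqrt 2 * Real.sqrt 2 = 2 := Real.mul_self_sqrt (by norm_num)
  by_cases h : i = j <;> simp [h] <;> nlinarith

lemma norm_sum_W (c : ℕ → ℝ) (F : Finset ℕ) :
    ‖∑ n ∈ F, c n • W n‖ ^ 2 = (1 / 2) * ∑ n ∈ F, (c n) ^ 2 := by
  classical
  rw [← real_inner_self_eq_norm_sq, sum_inner]
  have key : ∀ i ∈ F, (inner ℝ (c i • W i) (∑ n ∈ F, c n • W n) : ℝ)
      = (c i) ^ 2 * (1 / 2) := by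
    intro i hi
    rw [real_inner_smul_left, inner_sum]
    have h1 : ∀ j ∈ F, (inner ℝ (W i) (c j • W j) : ℝ)
        = if i = j then c j * (1 / 2) else 0 := by
      intro j _
      rw [real_inner_smul_right, inner_W_W]
      by_cases h : i = j <;> simp [h]
    rw [Finset.sum_congr rfl h1, Finset.sum_ite_eq F i (fun j => c j * (1 / 2)), if_pos hi]
    ring
  rw [Finset.sum_congr rfl key, ← Finset.sum_mul]
  ring

lemma s2_eq (f : ℝ → ℝ) (n : ℕ) :
    s2 f (n + 1) = ∫ x in Set.Ioo (0:ℝ) 1, f x * sf n x := by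
  unfold s2 sf
  norm_num

lemma inner_W_toLp {f : ℝ → ℝ} (hf : MemLp f 2 μ01) (n : ℕ) :
    (inner ℝ (W n) (hf.toLp f) : ℝ) = s2 f (n + 1) := by
  rw [W, inner_toLp (memLp_sf n) hf, s2_eq]
  apply MeasureTheory.integral_congr_ae
  exact ae_of_all _ fun x => mul_comm _ _

lemma inner_V_toLp {f : ℝ → ℝ} (hf : MemLp f 2 μ01) (n : ℕ) :
    (inner ℝ (V n) (hf.toLp f) : ℝ) = Real.sqrt 2 * s2 f (n + 1) := by
  rw [V, real_inner_smul_left, inner_W_toLp hf]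

lemma norm_inner_V_sq {f : ℝ → ℝ} (hf : MemLp f 2 μ01) (n : ℕ) :
    ‖(inner ℝ (V n) (hf.toLp f) : ℝ)‖ ^ 2 = 2 * (s2 f (n + 1)) ^ 2 := by
  rw [inner_V_toLp hf n, Real.norm_eq_abs, sq_abs, mul_pow,
    Real.sq_sqrt (by norm_num : (0:ℝ) ≤ 2)]

lemma bessel_fin {f : ℝ → ℝ} (hf : MemLp f 2 μ01) (F : Finset ℕ) :
    ∑ n ∈ F, (s2 f (n + 1)) ^ 2 ≤ (1 / 2) * ‖hf.toLp f‖ ^ 2 := by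
  have h := orthonormal_V.sum_inner_products_le (𝕜 := ℝ) (hf.toLp f) (s := F)
  rw [Finset.sum_congr rfl (fun n _ => norm_inner_V_sq hf n), ← Finset.mul_sum] at h
  linarith

lemma bessel_summable {f : ℝ → ℝ} (hf : MemLp f 2 μ01) :
    Summable (fun n => (s2 f (n + 1)) ^ 2) := by
  have h := orthonormal_V.inner_products_summable (𝕜 := ℝ) (hf.toLp f)
  have h2 : Summable (fun n => 2 * (s2 f (n + 1)) ^ 2) :=
    h.congr (fun n => norm_inner_V_sq hf n)
  have := h2.mul_left (1 / 2)
  apply this.congr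
  intro n; ring

lemma abs_s2_le {f : ℝ → ℝ} (hf : MemLp f 2 μ01) (n : ℕ) :
    |s2 f (n + 1)| ≤ ‖hf.toLp f‖ := by
  have h := bessel_fin hf {n}
  rw [Finset.sum_singleton] at h
  have h2 : (s2 f (n + 1)) ^ 2 ≤ ‖hf.toLp f‖ ^ 2 := by nlinarith [sq_nonneg ‖hf.toLp f‖]
  calc |s2 f (n + 1)| = Real.sqrt ((s2 f (n + 1)) ^ 2) := (Real.sqrt_sq_eq_abs _).symm
    _ ≤ Real.sqrt (‖hf.toLp f‖ ^ 2) := Real.sqrt_le_sqrt h2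
    _ = ‖hf.toLp f‖ := Real.sqrt_sq (norm_nonneg _)

-- ===== Block 6 : the functions x·sin and sums =====

def xsf (n : ℕ) (x : ℝ) : ℝ := x * sf n x

lemma memLp_xsf (n : ℕ) : MemLp (xsf n) 2 μ01 := by
  apply MemLp.of_bound ((continuous_id.mul (sf_cont n)).aestronglyMeasurable) 1
  filter_upwards [ae_restrict_mem measurableSet_Ioo] with x hx
  show |xsf n x| ≤ 1
  rw [xsf, abs_mul]
  have h1 : |x| ≤ 1 := by rw [abs_of_pos hx.1]; exact hx.2.le
  have h2 : |sf n x| ≤ 1 := Real.abs_sin_le_one _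
  nlinarith [abs_nonneg x, abs_nonneg (sf n x)]

def XW (n : ℕ) : Lp ℝ 2 μ01 := (memLp_xsf n).toLp (xsf n)

lemma toLp_sum' {u : ℕ → ℝ → ℝ} (hu : ∀ n, MemLp (u n) 2 μ01) (F : Finset ℕ)
    (h : MemLp (∑ n ∈ F, u n) 2 μ01) :
    h.toLp (∑ n ∈ F, u n) = ∑ n ∈ F, (hu n).toLp (u n) := by
  rw [MemLp.toLp_congr h (memLp_finset_sum' F (fun n _ => hu n)) EventuallyEq.rfl]
  exact toLp_sum hu F

lemma sum_smul_W_eq (c : ℕ → ℝ) (F : Finset ℕ)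
    (h : MemLp (∑ n ∈ F, c n • sf n) 2 μ01) :
    h.toLp (∑ n ∈ F, c n • sf n) = ∑ n ∈ F, c n • W n := by
  rw [toLp_sum' (fun n => (memLp_sf n).const_smul (c n)) F h]
  exact Finset.sum_congr rfl fun n _ => MemLp.toLp_const_smul (c n) (memLp_sf n)

lemma sum_smul_XW_eq (c : ℕ → ℝ) (F : Finset ℕ)
    (h : MemLp (∑ n ∈ F, c n • xsf n) 2 μ01) :
    h.toLp (∑ n ∈ F, c n • xsf n) = ∑ n ∈ F, c n • XW n := by
  rw [toLp_sum' (fun n => (memLp_xsf n).const_smul (c n)) F h]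
  exact Finset.sum_congr rfl fun n _ => MemLp.toLp_const_smul (c n) (memLp_xsf n)

lemma norm_sum_smul_XW_le (c : ℕ → ℝ) (F : Finset ℕ) :
    ‖∑ n ∈ F, c n • XW n‖ ≤ Real.sqrt ((1 / 2) * ∑ n ∈ F, (c n) ^ 2) := by
  have hx : MemLp (∑ n ∈ F, c n • xsf n) 2 μ01 :=
    memLp_finset_sum' F (fun n _ => (memLp_xsf n).const_smul (c n))
  have hs : MemLp (∑ n ∈ F, c n • sf n) 2 μ01 :=
    memLp_finset_sum' F (fun n _ => (memLp_sf n).const_smul (c n))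
  rw [← sum_smul_XW_eq c F hx]
  have hmono : ‖hx.toLp _‖ ≤ ‖hs.toLp _‖ := by
    apply norm_toLp_mono hx hs
    filter_upwards [ae_restrict_mem measurableSet_Ioo] with x hx'
    have he : (∑ n ∈ F, c n • xsf n) x = x * (∑ n ∈ F, c n • sf n) x := by
      simp only [Finset.sum_apply, Pi.smul_apply, smul_eq_mul, xsf, Finset.mul_sum]
      exact Finset.sum_congr rfl fun n _ => by ring
    rw [he, abs_mul]
    have h1 : |x| ≤ 1 := by rw [abs_of_pos hx'.1]; exact hx'.2.le
    nlinarith [abs_nonneg ((∑ n ∈ F, c n • sf n) x), abs_nonneg x]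
  refine hmono.trans ?_
  rw [sum_smul_W_eq c F hs]
  have heq : ‖∑ n ∈ F, c n • W n‖ = Real.sqrt ((1 / 2) * ∑ n ∈ F, (c n) ^ 2) := by
    rw [← norm_sum_W c F]
    exact (Real.sqrt_sq (norm_nonneg _)).symm
  exact le_of_eq heq

-- ===== Block 7 : the series terms =====

lemma tTerm_cont (f : ℝ → ℝ) (n : ℕ) : Continuous (tTerm f n) := by
  unfold tTerm; continuity

lemma memLp_tTerm (f : ℝ → ℝ) (n : ℕ) : MemLp (tTerm f n) 2 μ01 :=
  MemLp.of_bound (tTerm_cont f n).aestronglyMeasurable 2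
    (ae_of_all _ fun x => by
      rw [Real.norm_eq_abs, tTerm]
      have h1 := Real.abs_cos_le_one (2 * Real.pi * ((n : ℝ) + 1) * x + 2 * s2 f (n + 1) * x)
      have h2 := Real.abs_cos_le_one (2 * Real.pi * ((n : ℝ) + 1) * x)
      have h3 := abs_sub (Real.cos (2 * Real.pi * ((n : ℝ) + 1) * x + 2 * s2 f (n + 1) * x))
        (Real.cos (2 * Real.pi * ((n : ℝ) + 1) * x))
      linarith)

def TT (f : ℝ → ℝ) (n : ℕ) : Lp ℝ 2 μ01 := (memLp_tTerm f n).toLp (tTerm f n)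

def errF (f : ℝ → ℝ) (n : ℕ) (x : ℝ) : ℝ :=
  eG (s2 f (n + 1)) (2 * Real.pi * ((n : ℝ) + 1) * x) x

lemma errF_cont (f : ℝ → ℝ) (n : ℕ) : Continuous (errF f n) := by
  unfold errF eG; continuity

lemma memLp_errF (f : ℝ → ℝ) (n : ℕ) : MemLp (errF f n) 2 μ01 :=
  MemLp.of_bound (errF_cont f n).aestronglyMeasurable
    ((4 + 8 * |s2 f (n + 1)|) * (s2 f (n + 1)) ^ 2)
    (by
      filter_upwards [ae_restrict_mem measurableSet_Ioo] with x hx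
      rw [Real.norm_eq_abs]
      exact eG_bound hx.1.le hx.2.le le_rfl)

def ER (f : ℝ → ℝ) (n : ℕ) : Lp ℝ 2 μ01 := (memLp_errF f n).toLp (errF f n)

lemma tTerm_decomp (f : ℝ → ℝ) (n : ℕ) :
    tTerm f n = (-(2 * s2 f (n + 1))) • xsf n + errF f n := by
  funext x
  simp only [tTerm, Pi.add_apply, Pi.smul_apply, smul_eq_mul, errF, eG, xsf, sf]
  ring

lemma TT_eq (f : ℝ → ℝ) (n : ℕ) :
    TT f n = (-(2 * s2 f (n + 1))) • XW n + ER f n := by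
  unfold TT XW ER
  rw [MemLp.toLp_congr (memLp_tTerm f n)
    (((memLp_xsf n).const_smul _).add (memLp_errF f n)) (by rw [tTerm_decomp f n]),
    MemLp.toLp_add, MemLp.toLp_const_smul]
  exact (memLp_xsf n).const_smul _

lemma norm_ER_le {f : ℝ → ℝ} (hf : MemLp f 2 μ01) (n : ℕ) :
    ‖ER f n‖ ≤ (4 + 8 * ‖hf.toLp f‖) * (s2 f (n + 1)) ^ 2 := by
  apply norm_toLp_le_of_bound _ (by positivity)
  filter_upwards [ae_restrict_mem measurableSet_Ioo] with x hx
  exact eG_bound hx.1.le hx.2.le (abs_s2_le hf n)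

lemma norm_ER_sub_le {f₁ f₂ : ℝ → ℝ} {K : ℝ} (hf₁ : MemLp f₁ 2 μ01)
    (hf₂ : MemLp f₂ 2 μ01) (h1 : ‖hf₁.toLp f₁‖ ≤ K) (h2 : ‖hf₂.toLp f₂‖ ≤ K) (n : ℕ) :
    ‖ER f₁ n - ER f₂ n‖ ≤ (4 + 16 * K) *
      ((|s2 f₁ (n + 1)| + |s2 f₂ (n + 1)|) * |s2 f₁ (n + 1) - s2 f₂ (n + 1)|) := by
  have hK0 : 0 ≤ K := le_trans (norm_nonneg _) h1
  have hER : ER f₁ n - ER f₂ n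
      = ((memLp_errF f₁ n).sub (memLp_errF f₂ n)).toLp (errF f₁ n - errF f₂ n) :=
    (MemLp.toLp_sub _ _).symm
  rw [hER]
  apply norm_toLp_le_of_bound _ (by positivity)
  filter_upwards [ae_restrict_mem measurableSet_Ioo] with x hx
  show |(errF f₁ n - errF f₂ n) x| ≤ _
  rw [Pi.sub_apply]
  exact eG_diff_bound hx.1.le hx.2.le ((abs_s2_le hf₁ n).trans h1)
    ((abs_s2_le hf₂ n).trans h2)

lemma integrable_f_sf {f : ℝ → ℝ} (hf : MemLp f 2 μ01) (m : ℕ) :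
    Integrable (fun x => f x * Real.sin (2 * Real.pi * (m : ℝ) * x)) μ01 := by
  have hfi : Integrable f μ01 := hf.integrable one_le_two
  have h := hfi.bdd_mul
    ((Real.continuous_sin.comp (by continuity : Continuous
      (fun x : ℝ => 2 * Real.pi * (m : ℝ) * x))).aestronglyMeasurable)
    (c := 1) (ae_of_all _ fun x => by simpa [Real.norm_eq_abs] using Real.abs_sin_le_one _)
  exact h.congr (ae_of_all _ fun x => mul_comm _ _)

lemma s2_sub {f₁ f₂ : ℝ → ℝ} (hf₁ : MemLp f₁ 2 μ01) (hf₂ : MemLp f₂ 2 μ01) (m : ℕ) :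
    s2 (f₁ - f₂) m = s2 f₁ m - s2 f₂ m := by
  unfold s2
  rw [← MeasureTheory.integral_sub (integrable_f_sf hf₁ m) (integrable_f_sf hf₂ m)]
  apply MeasureTheory.integral_congr_ae
  exact ae_of_all _ fun x => by simp [Pi.sub_apply]; ring

-- ===== Block 8 : convergence of the series =====

def SS (f : ℝ → ℝ) (N : ℕ) : Lp ℝ 2 μ01 := ∑ n ∈ Finset.range N, TT f n

lemma summable_ER {f : ℝ → ℝ} (hf : MemLp f 2 μ01) : Summable (fun n => ER f n) := by
  apply Summable.of_norm
  apply Summable.of_nonneg_of_le (fun n => norm_nonneg _) (fun n => norm_ER_le hf n)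
  exact (bessel_summable hf).mul_left _

lemma tendsto_SS {f : ℝ → ℝ} (hf : MemLp f 2 μ01) :
    ∃ TE : Lp ℝ 2 μ01, Tendsto (SS f) atTop (𝓝 TE) := by
  classical
  set c : ℕ → ℝ := fun n => -(2 * s2 f (n + 1)) with hc
  have hcsq : Summable (fun n => c n ^ 2) := by
    have h4 := (bessel_summable hf).mul_left 4
    apply h4.congr
    intro n; simp only [hc]; ring
  set A : ℕ → Lp ℝ 2 μ01 := fun N => ∑ n ∈ Finset.range N, c n • XW n with hA
  set Q : ℝ := ∑' n, c n ^ 2 with hQ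
  have hAc : CauchySeq A := by
    apply cauchySeq_of_le_tendsto_0'
      (b := fun N => Real.sqrt ((1 / 2) * (Q - ∑ n ∈ Finset.range N, c n ^ 2)))
    · intro N m hNm
      rw [dist_eq_norm, norm_sub_rev]
      have hsub : A m - A N = ∑ n ∈ Finset.Ico N m, c n • XW n := by
        rw [hA]
        simp only
        rw [Finset.sum_Ico_eq_sub _ hNm]
      rw [hsub]
      refine (norm_sum_smul_XW_le c _).trans (Real.sqrt_le_sqrt ?_)
      have hconsec : (∑ n ∈ Finset.range N, c n ^ 2) + ∑ n ∈ Finset.Ico N m, c n ^ 2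
          = ∑ n ∈ Finset.range m, c n ^ 2 := by
        simp only [Finset.range_eq_Ico]
        exact Finset.sum_Ico_consecutive (fun n => c n ^ 2) (Nat.zero_le N) hNm
      have hle : ∑ n ∈ Finset.range m, c n ^ 2 ≤ Q :=
        Summable.sum_le_tsum _ (fun i _ => sq_nonneg _) hcsq
      linarith
    · have h0 : Tendsto (fun N => (1 / 2) * (Q - ∑ n ∈ Finset.range N, c n ^ 2))
          atTop (𝓝 0) := by
        have ht := hcsq.hasSum.tendsto_sum_nat
        have := (tendsto_const_nhds (x := Q) (f := atTop)).sub ht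
        have := this.const_mul (1 / 2)
        simpa [← hQ] using this
      simpa using h0.sqrt
  obtain ⟨AL, hAL⟩ := cauchySeq_tendsto_of_complete hAc
  have hBL := (summable_ER hf).hasSum.tendsto_sum_nat
  refine ⟨AL + ∑' n, ER f n, ?_⟩
  have hdec : ∀ N, SS f N = A N + ∑ n ∈ Finset.range N, ER f n := by
    intro N
    rw [SS, hA]
    simp only
    rw [← Finset.sum_add_distrib]
    exact Finset.sum_congr rfl fun n _ => TT_eq f n
  exact (hAL.add hBL).congr (fun N => (hdec N).symm)

-- ===== Block 9 : bridge between integrals and Lp norms =====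

lemma integral_sq_eq_norm {T : ℝ → ℝ} (hT : MemLp T 2 μ01) (f : ℝ → ℝ) (N : ℕ) :
    (∫ x in Set.Ioo (0:ℝ) 1, (T x - ∑ n ∈ Finset.range N, tTerm f n x) ^ 2)
      = ‖hT.toLp T - SS f N‖ ^ 2 := by
  have hS : MemLp (∑ n ∈ Finset.range N, tTerm f n) 2 μ01 :=
    memLp_finset_sum' _ (fun n _ => memLp_tTerm f n)
  have hsub : MemLp (T - ∑ n ∈ Finset.range N, tTerm f n) 2 μ01 := hT.sub hS
  have h1 : hsub.toLp _ = hT.toLp T - SS f N := by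
    rw [MemLp.toLp_sub hT hS, SS, toLp_sum' (fun n => memLp_tTerm f n) _ hS]
    rfl
  have h2 := norm_toLp_sq hsub
  rw [h1] at h2
  rw [h2]
  apply MeasureTheory.integral_congr_ae
  exact ae_of_all _ fun x => by simp [Finset.sum_apply]

lemma isTSum_of_tendsto {f : ℝ → ℝ} {TE : Lp ℝ 2 μ01}
    (h : Tendsto (SS f) atTop (𝓝 TE)) : IsTSum f (⇑TE) := by
  refine ⟨Lp.memLp TE, ?_⟩
  have key : ∀ N, (∫ x in Set.Ioo (0:ℝ) 1,
      ((TE : ℝ → ℝ) x - ∑ n ∈ Finset.range N, tTerm f n x) ^ 2) = ‖TE - SS f N‖ ^ 2 := by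
    intro N
    rw [integral_sq_eq_norm (Lp.memLp TE) f N, MeasureTheory.Lp.toLp_coeFn]
  rw [show (fun N : ℕ => ∫ x in Set.Ioo (0:ℝ) 1,
      ((TE : ℝ → ℝ) x - ∑ n ∈ Finset.range N, tTerm f n x) ^ 2)
    = fun N => ‖TE - SS f N‖ ^ 2 from funext key]
  have hn : Tendsto (fun N => ‖TE - SS f N‖) atTop (𝓝 0) := by
    have := (tendsto_const_nhds (x := TE) (f := atTop)).sub h
    simpa using this.norm
  simpa using hn.pow 2

lemma tendsto_of_isTSum {f T : ℝ → ℝ} (h : IsTSum f T) :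
    Tendsto (SS f) atTop (𝓝 (h.1.toLp T)) := by
  have h2 := h.2
  rw [show (fun N : ℕ => ∫ x in Set.Ioo (0:ℝ) 1,
      (T x - ∑ n ∈ Finset.range N, tTerm f n x) ^ 2)
    = fun N => ‖h.1.toLp T - SS f N‖ ^ 2 from funext (fun N => integral_sq_eq_norm h.1 f N)]
    at h2
  have hn : Tendsto (fun N => ‖h.1.toLp T - SS f N‖) atTop (𝓝 0) := by
    have := h2.sqrt
    rw [Real.sqrt_zero] at this
    exact this.congr fun N => Real.sqrt_sq (norm_nonneg _)
  apply tendsto_iff_norm_sub_tendsto_zero.2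
  exact hn.congr fun N => by rw [norm_sub_rev]
end
end Stmt12

open Stmt12 in
theorem stmt_12 :
    (∀ f : ℝ → ℝ, GoodOdd f → ∃ T : ℝ → ℝ, IsTSum f T) ∧
    ∀ K : ℝ, 0 < K → ∃ C : ℝ, 0 < C ∧
      ∀ f₁ f₂ : ℝ → ℝ, GoodOdd f₁ → GoodOdd f₂ →
        Real.sqrt (∫ x in Set.Ioo (0 : ℝ) 1, (f₁ x) ^ 2) ≤ K →
        Real.sqrt (∫ x in Set.Ioo (0 : ℝ) 1, (f₂ x) ^ 2) ≤ K →
        ∀ T₁ T₂ : ℝ → ℝ, IsTSum f₁ T₁ → IsTSum f₂ T₂ →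
          Real.sqrt (∫ x in Set.Ioo (0 : ℝ) 1, (T₁ x - T₂ x) ^ 2) ≤
            C * Real.sqrt (∫ x in Set.Ioo (0 : ℝ) 1, (f₁ x - f₂ x) ^ 2) := by
  constructor
  · intro f hgood
    obtain ⟨TE, hTE⟩ := tendsto_SS hgood.1
    exact ⟨⇑TE, isTSum_of_tendsto hTE⟩
  · intro K hK
    refine ⟨1 + (4 + 16 * K) * K, by nlinarith, ?_⟩
    intro f₁ f₂ hg₁ hg₂ hK₁ hK₂ T₁ T₂ hT₁ hT₂
    have hf₁ : MemLp f₁ 2 μ01 := hg₁.1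
    have hf₂ : MemLp f₂ 2 μ01 := hg₂.1
    have hN₁ : ‖hf₁.toLp f₁‖ ≤ K := by rw [norm_toLp_eq hf₁]; exact hK₁
    have hN₂ : ‖hf₂.toLp f₂‖ ≤ K := by rw [norm_toLp_eq hf₂]; exact hK₂
    have hK0 : 0 ≤ K := hK.le
    have hd : MemLp (f₁ - f₂) 2 μ01 := hf₁.sub hf₂
    set D : ℝ := ‖hd.toLp (f₁ - f₂)‖ with hDdef
    have hD0 : 0 ≤ D := norm_nonneg _
    have hDeq : Real.sqrt (∫ x in Set.Ioo (0:ℝ) 1, (f₁ x - f₂ x) ^ 2) = D := by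
      rw [hDdef, norm_toLp_eq hd]
      simp only [Pi.sub_apply]
    have hbd' : ∀ N : ℕ, ∑ n ∈ Finset.range N,
        (s2 f₁ (n + 1) - s2 f₂ (n + 1)) ^ 2 ≤ (1 / 2) * D ^ 2 := by
      intro N
      have hbd := bessel_fin hd (Finset.range N)
      rw [← hDdef] at hbd
      calc ∑ n ∈ Finset.range N, (s2 f₁ (n + 1) - s2 f₂ (n + 1)) ^ 2
          = ∑ n ∈ Finset.range N, (s2 (f₁ - f₂) (n + 1)) ^ 2 :=
            Finset.sum_congr rfl fun n _ => by rw [s2_sub hf₁ hf₂ (n + 1)]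
        _ ≤ (1 / 2) * D ^ 2 := hbd
    have hGN : ∀ N : ℕ, ‖SS f₁ N - SS f₂ N‖ ≤ (1 + (4 + 16 * K) * K) * D := by
      intro N
      have hdecomp : SS f₁ N - SS f₂ N
          = (∑ n ∈ Finset.range N, (-(2 * (s2 f₁ (n + 1) - s2 f₂ (n + 1)))) • XW n)
            + ∑ n ∈ Finset.range N, (ER f₁ n - ER f₂ n) := by
        unfold SS
        rw [← Finset.sum_sub_distrib, ← Finset.sum_add_distrib]
        refine Finset.sum_congr rfl fun n _ => ?_
        rw [TT_eq f₁ n, TT_eq f₂ n]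
        module
      rw [hdecomp]
      refine (norm_add_le _ _).trans ?_
      have h1 : ‖∑ n ∈ Finset.range N,
          (-(2 * (s2 f₁ (n + 1) - s2 f₂ (n + 1)))) • XW n‖ ≤ D := by
        refine (norm_sum_smul_XW_le _ _).trans ?_
        have hle : (1 / 2) * ∑ n ∈ Finset.range N,
            (-(2 * (s2 f₁ (n + 1) - s2 f₂ (n + 1)))) ^ 2 ≤ D ^ 2 := by
          have he : ∀ n ∈ Finset.range N, (-(2 * (s2 f₁ (n + 1) - s2 f₂ (n + 1)))) ^ 2
              = 4 * (s2 f₁ (n + 1) - s2 f₂ (n + 1)) ^ 2 := fun n _ => by ring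
          rw [Finset.sum_congr rfl he, ← Finset.mul_sum]
          nlinarith [hbd' N]
        calc Real.sqrt ((1 / 2) * ∑ n ∈ Finset.range N,
              (-(2 * (s2 f₁ (n + 1) - s2 f₂ (n + 1)))) ^ 2)
            ≤ Real.sqrt (D ^ 2) := Real.sqrt_le_sqrt hle
          _ = D := Real.sqrt_sq hD0
      have h2 : ‖∑ n ∈ Finset.range N, (ER f₁ n - ER f₂ n)‖
          ≤ (4 + 16 * K) * (K * D) := by
        refine (norm_sum_le _ _).trans ?_
        refine (Finset.sum_le_sum (fun n _ => norm_ER_sub_le hf₁ hf₂ hN₁ hN₂ n)).trans ?_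
        rw [← Finset.mul_sum]
        have hCS : ∑ n ∈ Finset.range N,
            ((|s2 f₁ (n + 1)| + |s2 f₂ (n + 1)|) * |s2 f₁ (n + 1) - s2 f₂ (n + 1)|)
            ≤ K * D := by
          set a : ℕ → ℝ := fun n => |s2 f₁ (n + 1)| + |s2 f₂ (n + 1)| with hadef
          set b : ℕ → ℝ := fun n => |s2 f₁ (n + 1) - s2 f₂ (n + 1)| with hbdef
          have hcs := Finset.sum_mul_sq_le_sq_mul_sq (Finset.range N) a b
          have ha : ∑ n ∈ Finset.range N, a n ^ 2 ≤ 2 * K ^ 2 := by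
            have e1 := bessel_fin hf₁ (Finset.range N)
            have e2 := bessel_fin hf₂ (Finset.range N)
            have hterm : ∀ n ∈ Finset.range N,
                a n ^ 2 ≤ 2 * (s2 f₁ (n + 1)) ^ 2 + 2 * (s2 f₂ (n + 1)) ^ 2 := by
              intro n _
              have hs1 := sq_abs (s2 f₁ (n + 1))
              have hs2 := sq_abs (s2 f₂ (n + 1))
              have hs3 := sq_nonneg (|s2 f₁ (n + 1)| - |s2 f₂ (n + 1)|)
              simp only [hadef]
              nlinarith
            have hsum := Finset.sum_le_sum hterm
            rw [Finset.sum_add_distrib, ← Finset.mul_sum, ← Finset.mul_sum] at hsum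
            have hB1 : ‖hf₁.toLp f₁‖ ^ 2 ≤ K ^ 2 := by
              nlinarith [norm_nonneg (hf₁.toLp f₁)]
            have hB2 : ‖hf₂.toLp f₂‖ ^ 2 ≤ K ^ 2 := by
              nlinarith [norm_nonneg (hf₂.toLp f₂)]
            nlinarith
          have hb : ∑ n ∈ Finset.range N, b n ^ 2 ≤ (1 / 2) * D ^ 2 := by
            have hB : ∀ n ∈ Finset.range N,
                b n ^ 2 = (s2 f₁ (n + 1) - s2 f₂ (n + 1)) ^ 2 := fun n _ => sq_abs _
            rw [Finset.sum_congr rfl hB]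
            exact hbd' N
          have hsum0 : 0 ≤ ∑ n ∈ Finset.range N, a n * b n :=
            Finset.sum_nonneg fun n _ => mul_nonneg (by positivity) (abs_nonneg _)
          have hprod : (∑ n ∈ Finset.range N, a n * b n) ^ 2
              ≤ (2 * K ^ 2) * ((1 / 2) * D ^ 2) := by
            calc (∑ n ∈ Finset.range N, a n * b n) ^ 2
                ≤ (∑ n ∈ Finset.range N, a n ^ 2) * ∑ n ∈ Finset.range N, b n ^ 2 := hcs
              _ ≤ (2 * K ^ 2) * ((1 / 2) * D ^ 2) := by
                  apply mul_le_mul ha hb (Finset.sum_nonneg fun n _ => sq_nonneg _)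
                    (by positivity)
          calc ∑ n ∈ Finset.range N, a n * b n
              = Real.sqrt ((∑ n ∈ Finset.range N, a n * b n) ^ 2) :=
                (Real.sqrt_sq hsum0).symm
            _ ≤ Real.sqrt ((2 * K ^ 2) * ((1 / 2) * D ^ 2)) := Real.sqrt_le_sqrt hprod
            _ = Real.sqrt ((K * D) ^ 2) := by ring_nf
            _ = K * D := Real.sqrt_sq (by positivity)
        exact mul_le_mul_of_nonneg_left hCS (by positivity)
      calc _ ≤ D + (4 + 16 * K) * (K * D) := add_le_add h1 h2
        _ = (1 + (4 + 16 * K) * K) * D := by ring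
    have hl₁ := tendsto_of_isTSum hT₁
    have hl₂ := tendsto_of_isTSum hT₂
    have hlim := (hl₁.sub hl₂).norm
    have hle := le_of_tendsto hlim (Filter.Eventually.of_forall hGN)
    have hLHS : Real.sqrt (∫ x in Set.Ioo (0:ℝ) 1, (T₁ x - T₂ x) ^ 2)
        = ‖hT₁.1.toLp T₁ - hT₂.1.toLp T₂‖ := by
      rw [← MemLp.toLp_sub hT₁.1 hT₂.1, norm_toLp_eq (hT₁.1.sub hT₂.1)]
      simp only [Pi.sub_apply]
    rw [hLHS, hDeq]
    exact hle
end
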